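/- Let C be a locally finite EI category of type A∞ satisfying the transitivity condition, k a commutative ring, and V a kC-module whose graded piece V_j is a finitely generated k-module for every j. Then V is finitely generated as a kC-module if and only if for all sufficiently large j, V_{j+1} is spanned by the images α·v with α ∈ C(j,j+1) and v ∈ V_j. -/

import Mathlib

/-!
Finite generation in degrees `≤ N` makes every `V_{j+1}`, `j ≥ N`, a span of images of
lower pieces, and in type `A∞` every morphism `l → j + 1` with `l ≤ j` factors through `j`.
Conversely, spanning sets of the finitely many `k`-modules `V_0, …, V_N` generate `V`,
since the spanning condition propagates `V_j` into every `kC`-submodule degree by degree.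
-/

/-- A skeletal locally finite EI category with objects the non-negative
integers and `Hom i j` nonempty iff `i ≤ j`. -/
structure EICat where
  Hom : ℕ → ℕ → Type
  idm : ∀ i, Hom i i
  comp : ∀ {i j l : ℕ}, Hom j l → Hom i j → Hom i l
  id_comp : ∀ {i j : ℕ} (f : Hom i j), comp (idm j) f = f
  comp_id : ∀ {i j : ℕ} (f : Hom i j), comp f (idm i) = f
  assoc : ∀ {i j l m : ℕ} (f : Hom l m) (g : Hom j l) (h : Hom i j),
    comp (comp f g) h = comp f (comp g h)
  homFinite : ∀ i j, Finite (Hom i j)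
  ei : ∀ (i : ℕ) (f : Hom i i), ∃ g : Hom i i, comp f g = idm i ∧ comp g f = idm i
  nonempty_iff : ∀ i j, Nonempty (Hom i j) ↔ i ≤ j

/-- A morphism is an isomorphism. -/
def EICat.IsIso (C : EICat) {i j : ℕ} (f : C.Hom i j) : Prop :=
  ∃ g : C.Hom j i, C.comp f g = C.idm j ∧ C.comp g f = C.idm i

/-- A morphism is unfactorizable. -/
def EICat.Unfact (C : EICat) {i j : ℕ} (f : C.Hom i j) : Prop :=
  ¬ C.IsIso f ∧ ∀ (l : ℕ) (b₂ : C.Hom i l) (b₁ : C.Hom l j),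
    f = C.comp b₁ b₂ → C.IsIso b₁ ∨ C.IsIso b₂

/-- `C` is of type `A∞`: the underlying quiver of unfactorizable morphisms is
`0 → 1 → 2 → ⋯`. -/
def EICat.TypeAInf (C : EICat) : Prop :=
  ∀ i j : ℕ, (∃ f : C.Hom i j, C.Unfact f) ↔ j = i + 1

/-- The transitivity condition: `G_{i+1}` acts transitively on `C(i, i+1)`. -/
def EICat.TransCond (C : EICat) : Prop :=
  ∀ (i : ℕ) (f g : C.Hom i (i + 1)), ∃ e : C.Hom (i + 1) (i + 1), C.comp e f = g

/-- A `kC`-module: a (covariant) functor from `C` to `k`-modules. -/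
structure CMod (k : Type) [CommRing k] (C : EICat) where
  V : ℕ → Type
  [acg : ∀ i, AddCommGroup (V i)]
  [mod : ∀ i, Module k (V i)]
  act : ∀ {i j : ℕ}, C.Hom i j → V i →ₗ[k] V j
  act_id : ∀ i : ℕ, act (C.idm i) = LinearMap.id
  act_comp : ∀ {i j l : ℕ} (f : C.Hom j l) (g : C.Hom i j),
    act (C.comp f g) = (act f).comp (act g)

attribute [instance] CMod.acg CMod.mod

variable {k : Type} [CommRing k] {C : EICat}

/-- A family of `k`-submodules `W i ⊆ V i` is a `kC`-submodule if it is closed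
under the action of all morphisms of `C`. -/
def CMod.Closed (M : CMod k C) (W : ∀ i, Submodule k (M.V i)) : Prop :=
  ∀ (i j : ℕ) (f : C.Hom i j) (x : M.V i), x ∈ W i → M.act f x ∈ W j

/-- The `kC`-module `M` is finitely generated: there is a finite family of
homogeneous elements contained in no proper `kC`-submodule. -/
def CMod.FG (M : CMod k C) : Prop :=
  ∃ (n : ℕ) (d : Fin n → ℕ) (v : ∀ m : Fin n, M.V (d m)),
    ∀ W : ∀ i, Submodule k (M.V i), M.Closed W →
      (∀ m : Fin n, v m ∈ W (d m)) → ∀ i, W i = ⊤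

/-- A `kC`-submodule `W` of `M` is finitely generated: it contains a finite
family of homogeneous elements not all contained in any smaller
`kC`-submodule. -/
def CMod.SubFG (M : CMod k C) (W : ∀ i, Submodule k (M.V i)) : Prop :=
  ∃ (n : ℕ) (d : Fin n → ℕ) (v : ∀ m : Fin n, M.V (d m)),
    (∀ m : Fin n, v m ∈ W (d m)) ∧
    ∀ W' : ∀ i, Submodule k (M.V i), M.Closed W' →
      (∀ m : Fin n, v m ∈ W' (d m)) → ∀ i, W i ≤ W' i

/-- The `kC`-module `M` is Noetherian: every `kC`-submodule is finitely
generated. -/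
def CMod.Noetherian (M : CMod k C) : Prop :=
  ∀ W : ∀ i, Submodule k (M.V i), M.Closed W → M.SubFG W

namespace EICat

variable (C)

lemma lt_of_not_isIso {i j : ℕ} (f : C.Hom i j) (hf : ¬ C.IsIso f) : i < j := by
  obtain hlt | rfl := ((C.nonempty_iff i j).mp ⟨f⟩).lt_or_eq
  · exact hlt
  · exact absurd (C.ei i f) hf

lemma not_isIso_of_lt {i j : ℕ} (f : C.Hom i j) (h : i < j) : ¬ C.IsIso f := by
  rintro ⟨g, -, -⟩
  have := (C.nonempty_iff j i).mp ⟨g⟩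
  omega

variable {C}

lemma exists_comp_eq_of_lt (hA : C.TypeAInf) {i l : ℕ} (f : C.Hom i l) (h : i < l) :
    ∃ (b₁ : C.Hom (i + 1) l) (b₂ : C.Hom i (i + 1)), C.comp b₁ b₂ = f := by
  induction l using Nat.strong_induction_on with
  | _ l IH =>
    by_cases hl : l = i + 1
    · subst hl
      exact ⟨C.idm _, f, C.id_comp f⟩
    · have hfac : ¬ C.Unfact f := fun hf => hl ((hA i l).mp ⟨f, hf⟩)
      simp only [Unfact, C.not_isIso_of_lt f h, not_false_eq_true, true_and, not_forall,
        not_or] at hfac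
      obtain ⟨m, b₂, b₁, rfl, hb₁, hb₂⟩ := hfac
      obtain ⟨c₁, c₂, rfl⟩ := IH m (C.lt_of_not_isIso b₁ hb₁) b₂ (C.lt_of_not_isIso b₂ hb₂)
      exact ⟨C.comp b₁ c₁, c₂, C.assoc _ _ _⟩

lemma exists_comp_eq (hA : C.TypeAInf) {i j l : ℕ} (hij : i ≤ j) (hjl : j ≤ l)
    (f : C.Hom i l) : ∃ (h : C.Hom j l) (g : C.Hom i j), C.comp h g = f := by
  induction j, hij using Nat.le_induction with
  | base => exact ⟨f, C.idm i, C.comp_id f⟩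
  | succ j hij IH =>
    obtain ⟨h, g, rfl⟩ := IH (by omega)
    obtain ⟨b₁, b₂, rfl⟩ := exists_comp_eq_of_lt hA h (by omega)
    exact ⟨b₁, C.comp b₂ g, (C.assoc _ _ _).symm⟩

end EICat

namespace CMod

variable (M : CMod k C)

/-- The paper's `ρ_j(V)`. -/
def succSpan (j : ℕ) : Submodule k (M.V (j + 1)) :=
  Submodule.span k {y | ∃ (f : C.Hom j (j + 1)) (v : M.V j), y = M.act f v}

/-- The `kC`-submodule generated by `V_0, …, V_j`. -/
def spanBelow (j i : ℕ) : Submodule k (M.V i) :=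
  Submodule.span k {y | ∃ l ≤ j, ∃ (f : C.Hom l i) (w : M.V l), y = M.act f w}

lemma closed_spanBelow (j : ℕ) : M.Closed (M.spanBelow j) := by
  intro a b f x hx
  refine Submodule.span_mono ?_ (Submodule.apply_mem_span_image_of_mem_span (M.act f) hx)
  rintro _ ⟨_, ⟨l, hl, g, w, rfl⟩, rfl⟩
  exact ⟨l, hl, C.comp f g, w, by rw [M.act_comp]; rfl⟩

lemma mem_spanBelow_of_le {j l : ℕ} (hl : l ≤ j) (x : M.V l) : x ∈ M.spanBelow j l :=
  Submodule.subset_span ⟨l, hl, C.idm l, x, by rw [M.act_id]; rfl⟩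

lemma spanBelow_succ_le_succSpan (hA : C.TypeAInf) (j : ℕ) :
    M.spanBelow j (j + 1) ≤ M.succSpan j := by
  refine Submodule.span_le.mpr ?_
  rintro _ ⟨l, hl, f, w, rfl⟩
  obtain ⟨h, g, rfl⟩ := EICat.exists_comp_eq hA hl (Nat.le_succ j) f
  exact Submodule.subset_span ⟨h, M.act g w, by rw [M.act_comp]; rfl⟩

lemma succSpan_eq_top_of_fg (hA : C.TypeAInf) (hM : M.FG) :
    ∃ N, ∀ j, N ≤ j → M.succSpan j = ⊤ := by
  obtain ⟨n, d, v, hgen⟩ := hM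
  refine ⟨Finset.univ.sup d, fun j hj => top_le_iff.mp ?_⟩
  have hmem (m : Fin n) : v m ∈ M.spanBelow j (d m) :=
    M.mem_spanBelow_of_le ((Finset.le_sup (Finset.mem_univ m)).trans hj) _
  rw [← hgen _ (M.closed_spanBelow j) hmem (j + 1)]
  exact M.spanBelow_succ_le_succSpan hA j

lemma fg_of_finite {ι : Type} [Finite ι] (d : ι → ℕ) (v : ∀ m, M.V (d m))
    (hgen : ∀ W : ∀ i, Submodule k (M.V i), M.Closed W → (∀ m, v m ∈ W (d m)) →
      ∀ i, W i = ⊤) : M.FG := by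
  obtain ⟨n, ⟨e⟩⟩ := Finite.exists_equiv_fin ι
  refine ⟨n, fun m => d (e.symm m), fun m => v (e.symm m), fun W hW hmem => ?_⟩
  exact hgen W hW fun m => e.symm_apply_apply m ▸ hmem (e m)

variable {M} in
lemma Closed.eq_top {W : ∀ i, Submodule k (M.V i)} (hW : M.Closed W) {N : ℕ}
    (hlow : ∀ j ≤ N, W j = ⊤) (hsucc : ∀ j, N ≤ j → M.succSpan j = ⊤) (i : ℕ) :
    W i = ⊤ := by
  induction i with
  | zero => exact hlow 0 (Nat.zero_le N)
  | succ j ih =>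
    by_cases hj : j + 1 ≤ N
    · exact hlow _ hj
    · rw [eq_top_iff, ← hsucc j (by omega), succSpan, Submodule.span_le]
      rintro _ ⟨f, w, rfl⟩
      exact hW j (j + 1) f w (ih ▸ Submodule.mem_top)

lemma fg_of_succSpan_eq_top (hfin : ∀ j, Module.Finite k (M.V j)) {N : ℕ}
    (hN : ∀ j, N ≤ j → M.succSpan j = ⊤) : M.FG := by
  choose S hS using fun j : Fin (N + 1) => (hfin j).fg_top
  refine M.fg_of_finite (ι := Σ j, S j) (fun x => x.1) (fun x => x.2.1)
    fun W hW hmem => hW.eq_top (fun j hj => ?_) hN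
  rw [eq_top_iff, ← hS ⟨j, by omega⟩, Submodule.span_le]
  exact fun x hx => hmem ⟨⟨j, by omega⟩, ⟨x, hx⟩⟩

end CMod

theorem stmt_15_general {k : Type} [CommRing k] (C : EICat) (hA : C.TypeAInf)
    (M : CMod k C)
    (hfin : ∀ j : ℕ, Module.Finite k (M.V j)) :
    M.FG ↔ ∃ N : ℕ, ∀ j : ℕ, N ≤ j →
      Submodule.span k {y : M.V (j + 1) |
        ∃ (f : C.Hom j (j + 1)) (v : M.V j), y = M.act f v} = ⊤ :=
  ⟨M.succSpan_eq_top_of_fg hA, fun ⟨_, hN⟩ => M.fg_of_succSpan_eq_top hfin hN⟩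

/-- a `kC`-module `V` with all `V_j` finitely generated over `k`
is finitely generated as a `kC`-module iff for all sufficiently large `j`,
`V_{j+1}` is spanned by the elements `α · v` with `α ∈ C(j, j+1)`, `v ∈ V_j`. -/
theorem stmt_15 {k : Type} [CommRing k] (C : EICat) (hA : C.TypeAInf)
    (hT : C.TransCond) (M : CMod k C)
    (hfin : ∀ j : ℕ, Module.Finite k (M.V j)) :
    M.FG ↔ ∃ N : ℕ, ∀ j : ℕ, N ≤ j →
      Submodule.span k {y : M.V (j + 1) |
        ∃ (f : C.Hom j (j + 1)) (v : M.V j), y = M.act f v} = ⊤ :=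
  stmt_15_general C hA M hfin
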